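/- Let Ψ: ℤ → ℝ → ℂ be differentiable, let c be a constant 2×2 complex matrix, and let F: ℤ → ℝ → GL(2,ℂ) satisfy F_{k+1} = L_k(1)·F_k and dF_k/dt = (M_k(1) + F_k·c·F_k⁻¹)·F_k for all k and t. Set S_k := F_k⁻¹·𝐈·F_k. Then for every λ ∈ ℝ, with μ = (1+iλ)/√(1+λ²), one has F_k⁻¹·M_k(μ)·F_k - F_k⁻¹·(dF_k/dt) = -(2λ/(1+λ²))·𝕀 - (1/(1+λ²))·(2λ²(S_k+S_{k-1})/(1+⟨S_k,S_{k-1}⟩) + λ[S_k,S_{k-1}]/(1+⟨S_k,S_{k-1}⟩)) - c for all k and t. -/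

import Mathlib

open Matrix

noncomputable section

/-- `𝐈 = i σ₃`. -/
def matI : Matrix (Fin 2) (Fin 2) ℂ := !![Complex.I, 0; 0, -Complex.I]

/-- The `su(2)` inner product `⟨X,Y⟩ = -(1/2) tr (XY)`. -/
def suInner (X Y : Matrix (Fin 2) (Fin 2) ℂ) : ℝ := (-(Matrix.trace (X * Y)) / 2).re

/-- Entrywise derivative of a matrix-valued function of a real variable. -/
def matDeriv (A : ℝ → Matrix (Fin 2) (Fin 2) ℂ) (t : ℝ) : Matrix (Fin 2) (Fin 2) ℂ :=
  Matrix.of fun i j => deriv (fun s => A s i j) t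

/-- The (gauged) Ablowitz–Ladik Lax matrix `L_k(μ)`. -/
def Lmat (Ψ : ℤ → ℂ) (μ : ℂ) (k : ℤ) : Matrix (Fin 2) (Fin 2) ℂ :=
  !![1, Ψ k; -(starRingEnd ℂ) (Ψ k), 1] * !![μ, 0; 0, μ⁻¹]

/-- The (gauged) Ablowitz–Ladik Lax matrix `M_k(μ)`. -/
def Mmat (Ψ : ℤ → ℂ) (μ : ℂ) (k : ℤ) : Matrix (Fin 2) (Fin 2) ℂ :=
  !![Complex.I * Ψ k * (starRingEnd ℂ) (Ψ (k - 1)),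
      Complex.I * Ψ k - Complex.I * Ψ (k - 1);
    -Complex.I * (starRingEnd ℂ) (Ψ (k - 1)) + Complex.I * (starRingEnd ℂ) (Ψ k),
      -Complex.I * (starRingEnd ℂ) (Ψ k) * Ψ (k - 1)] +
  !![1, Ψ (k - 1); -(starRingEnd ℂ) (Ψ (k - 1)), 1] *
    !![Complex.I * (μ ^ 2 - 1), 0; 0, -Complex.I * (μ⁻¹ ^ 2 - 1)]

set_option maxHeartbeats 2000000 in
/-- The gauge transform of `M_k(μ)` by `F⁻¹` equals
`-(2λ/(1+λ²))𝕀 + V_k(λ) - c`, where `μ = (1+iλ)/√(1+λ²)`. -/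
theorem gauge_M_eq_heisenberg_V (Ψ : ℤ → ℝ → ℂ) (hΨ : ∀ k, Differentiable ℝ (Ψ k))
    (c : Matrix (Fin 2) (Fin 2) ℂ)
    (F : ℤ → ℝ → Matrix (Fin 2) (Fin 2) ℂ)
    (hFunit : ∀ (k : ℤ) (t : ℝ), IsUnit (F k t))
    (hFdiff : ∀ (k : ℤ) (i j : Fin 2), Differentiable ℝ (fun t => F k t i j))
    (hFrec : ∀ (k : ℤ) (t : ℝ), F (k + 1) t = Lmat (fun n => Ψ n t) 1 k * F k t)
    (hFode : ∀ (k : ℤ) (t : ℝ),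
      matDeriv (F k) t =
        (Mmat (fun n => Ψ n t) 1 k + F k t * c * (F k t)⁻¹) * F k t)
    (S : ℤ → ℝ → Matrix (Fin 2) (Fin 2) ℂ)
    (hS : ∀ (k : ℤ) (t : ℝ), S k t = (F k t)⁻¹ * matI * F k t) :
    ∀ (lam : ℝ) (k : ℤ) (t : ℝ),
      (F k t)⁻¹ *
          Mmat (fun n => Ψ n t) ((1 + Complex.I * (lam : ℂ)) / (Real.sqrt (1 + lam ^ 2) : ℂ)) k *
          F k t -
        (F k t)⁻¹ * matDeriv (F k) t =
      (-(2 * lam / (1 + lam ^ 2))) • (1 : Matrix (Fin 2) (Fin 2) ℂ) -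
        (1 / (1 + lam ^ 2)) •
          ((2 * lam ^ 2 / (1 + suInner (S k t) (S (k - 1) t))) • (S k t + S (k - 1) t) +
            (lam / (1 + suInner (S k t) (S (k - 1) t))) • ⁅S k t, S (k - 1) t⁆) -
        c := by
  intro lam k t
  have hFd : IsUnit (F k t).det := (Matrix.isUnit_iff_isUnit_det _).mp (hFunit k t)
  have h1 : F k t * (F k t)⁻¹ = 1 := Matrix.mul_nonsing_inv _ hFd
  have h2 : (F k t)⁻¹ * F k t = 1 := Matrix.nonsing_inv_mul _ hFd
  have hcan : ∀ Z : Matrix (Fin 2) (Fin 2) ℂ, F k t * ((F k t)⁻¹ * Z) = Z := fun Z => by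
    rw [← Matrix.mul_assoc, h1, Matrix.one_mul]
  have hcan' : ∀ Z : Matrix (Fin 2) (Fin 2) ℂ, (F k t)⁻¹ * (F k t * Z) = Z := fun Z => by
    rw [← Matrix.mul_assoc, h2, Matrix.one_mul]
  set ψ := Ψ (k - 1) t with hψdef
  set r : ℝ := Complex.normSq ψ with hrdef
  have hψc : ψ * (starRingEnd ℂ) ψ = (r : ℂ) := Complex.mul_conj ψ
  have hr0 : (0:ℝ) ≤ r := Complex.normSq_nonneg ψ
  have hr1 : (1:ℝ) + r ≠ 0 := by positivity
  have hr1C : (1:ℂ) + (r:ℂ) ≠ 0 := by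
    have : ((1+r:ℝ):ℂ) ≠ 0 := Complex.ofReal_ne_zero.mpr hr1
    push_cast at this
    exact this
  set A : Matrix (Fin 2) (Fin 2) ℂ := !![1, ψ; -(starRingEnd ℂ) ψ, 1] with hAdef
  set Ai : Matrix (Fin 2) (Fin 2) ℂ :=
    ((1:ℂ)+(r:ℂ))⁻¹ • !![1, -ψ; (starRingEnd ℂ) ψ, 1] with hAidef
  have hAAi : A * Ai = 1 := by
    ext i j
    fin_cases i <;> fin_cases j <;>
      simp [hAdef, hAidef, Matrix.mul_apply, Fin.sum_univ_two, Matrix.one_apply] <;>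
      field_simp <;>
      grind
  have hAiA : Ai * A = 1 := by
    ext i j
    fin_cases i <;> fin_cases j <;>
      simp [hAdef, hAidef, Matrix.mul_apply, Fin.sum_univ_two, Matrix.one_apply] <;>
      field_simp <;>
      linear_combination hψc
  -- recursion
  have hrec : F k t = A * F (k - 1) t := by
    have h := hFrec (k - 1) t
    rw [show k - 1 + 1 = k by ring] at h
    rw [h]
    congr 1
    simp only [Lmat, hAdef, ← hψdef]
    have hone2 : (!![(1:ℂ), 0; 0, 1⁻¹] : Matrix (Fin 2) (Fin 2) ℂ) = 1 := by
      norm_num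
      rw [← Matrix.one_fin_two]
    rw [hone2, Matrix.mul_one]
  have hprev : F (k - 1) t = Ai * F k t := by
    rw [hrec, ← Matrix.mul_assoc, hAiA, Matrix.one_mul]
  have hprevinv : (F (k - 1) t)⁻¹ = (F k t)⁻¹ * A := by
    apply Matrix.inv_eq_right_inv
    rw [hprev, Matrix.mul_assoc, hcan, hAiA]
  set X : Matrix (Fin 2) (Fin 2) ℂ := A * matI * Ai with hXdef
  have hSk1 : S (k - 1) t = (F k t)⁻¹ * X * F k t := by
    rw [hS, hprevinv, hprev, hXdef]
    simp only [Matrix.mul_assoc]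
  have hX' : X = ((1:ℂ)+(r:ℂ))⁻¹ •
      !![Complex.I*(1-(r:ℂ)), -2*Complex.I*ψ;
         -2*Complex.I*((starRingEnd ℂ) ψ), -Complex.I*(1-(r:ℂ))] := by
    have hr1C' : (1:ℂ) + ψ * (starRingEnd ℂ) ψ ≠ 0 := by rw [hψc]; exact hr1C
    rw [hXdef, hAdef, hAidef,
      show ((r:ℝ):ℂ) = ψ * (starRingEnd ℂ) ψ from hψc.symm]
    ext i j
    fin_cases i <;> fin_cases j <;>
      simp [matI, Matrix.mul_apply, Fin.sum_univ_two] <;>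
      field_simp <;>
      ring
  -- the inner product
  have h_inner : suInner (S k t) (S (k - 1) t) = (1 - r)/(1 + r) := by
    have hSS : S k t * S (k - 1) t = (F k t)⁻¹ * (matI * (X * F k t)) := by
      rw [hS k t, hSk1]
      simp only [Matrix.mul_assoc, hcan]
    rw [suInner, hSS]
    rw [Matrix.trace_mul_comm]
    have htr : Matrix.trace (matI * (X * F k t) * (F k t)⁻¹) = Matrix.trace (matI * X) := by
      rw [Matrix.mul_assoc, Matrix.mul_assoc, h1, Matrix.mul_one]
    rw [htr]
    have : -(Matrix.trace (matI * X)) / 2 = (((1 - r)/(1 + r) : ℝ) : ℂ) := by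
      rw [hX']
      simp [matI, Matrix.trace_fin_two, Matrix.mul_apply, Fin.sum_univ_two, Matrix.smul_apply,
        smul_eq_mul]
      push_cast
      field_simp
      linear_combination (-(1 - (r:ℂ)) * (1 + (r:ℂ)) + ((r:ℂ) - (r:ℂ)^2)) * Complex.I_mul_I
    rw [this, Complex.ofReal_re]
  -- splitting of M
  have hsplit : ∀ μ : ℂ, Mmat (fun n => Ψ n t) μ k = Mmat (fun n => Ψ n t) 1 k +
      A * !![Complex.I * (μ^2 - 1), 0; 0, -Complex.I * (μ⁻¹^2 - 1)] := by
    intro μ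
    ext i j
    fin_cases i <;> fin_cases j <;>
      simp [Mmat, hAdef, ← hψdef, Matrix.mul_apply, Fin.sum_univ_two] <;>
      ring
  -- scalar facts about μ
  have hlpos : (0:ℝ) < 1 + lam^2 := by positivity
  have hs2 : ((Real.sqrt (1+lam^2) : ℝ) : ℂ)^2 = 1 + (lam:ℂ)^2 := by
    rw [← Complex.ofReal_pow, Real.sq_sqrt hlpos.le]
    push_cast
    ring
  have hsne : ((Real.sqrt (1+lam^2) : ℝ) : ℂ) ≠ 0 :=
    Complex.ofReal_ne_zero.mpr (Real.sqrt_pos.mpr hlpos).ne'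
  have hlC : (1:ℂ) + (lam:ℂ)^2 ≠ 0 := by
    rw [← hs2]
    exact pow_ne_zero 2 hsne
  set μ : ℂ := (1 + Complex.I * (lam : ℂ)) / (Real.sqrt (1 + lam ^ 2) : ℂ) with hμdef
  have hμinv : μ⁻¹ = (1 - Complex.I * (lam:ℂ)) / (Real.sqrt (1 + lam ^ 2) : ℂ) := by
    apply inv_eq_of_mul_eq_one_right
    rw [hμdef, div_mul_div_comm, ← sq, hs2, div_eq_one_iff_eq hlC]
    linear_combination (-(lam:ℂ)^2) * Complex.I_sq
  have hc1 : Complex.I * (μ^2 - 1) = (-2*(lam:ℂ) - 2*Complex.I*(lam:ℂ)^2)/(1+(lam:ℂ)^2) := by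
    rw [hμdef, div_pow, hs2]
    field_simp
    linear_combination ((lam:ℂ)^2 * Complex.I + 2*(lam:ℂ)) * Complex.I_sq
  have hc2 : -Complex.I * (μ⁻¹^2 - 1) = (-2*(lam:ℂ) + 2*Complex.I*(lam:ℂ)^2)/(1+(lam:ℂ)^2) := by
    rw [hμinv, div_pow, hs2]
    field_simp
    linear_combination (-Complex.I*(lam:ℂ)^2 - Complex.I*(lam:ℂ)^4 + 2*(lam:ℂ) + 2*(lam:ℂ)^3 + Complex.I*(lam:ℂ)^4 - 2*(lam:ℂ)^3) * Complex.I_sq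
  -- derivative side
  have hode : (F k t)⁻¹ * matDeriv (F k) t =
      (F k t)⁻¹ * Mmat (fun n => Ψ n t) 1 k * F k t + c := by
    rw [hFode k t, Matrix.add_mul, Matrix.mul_add]
    congr 1
    · rw [Matrix.mul_assoc]
    · simp only [Matrix.mul_assoc, h2, Matrix.mul_one, hcan']
  rw [hode, hsplit μ]
  have hred : (F k t)⁻¹ * (Mmat (fun n => Ψ n t) 1 k +
        A * !![Complex.I * (μ^2 - 1), 0; 0, -Complex.I * (μ⁻¹^2 - 1)]) * F k t -
      ((F k t)⁻¹ * Mmat (fun n => Ψ n t) 1 k * F k t + c) =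
      (F k t)⁻¹ * (A * !![Complex.I * (μ^2 - 1), 0; 0, -Complex.I * (μ⁻¹^2 - 1)]) * F k t - c := by
    simp only [Matrix.add_mul, Matrix.mul_add, Matrix.mul_assoc]
    abel
  rw [hred]
  -- RHS to conjugated form
  have hbr : ⁅S k t, S (k - 1) t⁆ = (F k t)⁻¹ * (matI * X - X * matI) * F k t := by
    rw [Ring.lie_def, hS k t, hSk1]
    simp only [Matrix.sub_mul, Matrix.mul_sub, Matrix.mul_assoc, hcan]
  have hadd : S k t + S (k - 1) t = (F k t)⁻¹ * (matI + X) * F k t := by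
    rw [hS k t, hSk1]
    simp only [Matrix.add_mul, Matrix.mul_add, Matrix.mul_assoc]
  have hconj_smul : ∀ (s : ℝ) (P : Matrix (Fin 2) (Fin 2) ℂ),
      s • ((F k t)⁻¹ * P * F k t) = (F k t)⁻¹ * (s • P) * F k t := by
    intro s P
    rw [Matrix.mul_smul, Matrix.smul_mul]
  have hconj_add : ∀ P Q : Matrix (Fin 2) (Fin 2) ℂ,
      (F k t)⁻¹ * P * F k t + (F k t)⁻¹ * Q * F k t = (F k t)⁻¹ * (P + Q) * F k t := by
    intro P Q
    rw [Matrix.mul_add, Matrix.add_mul]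
  have hone : (-(2 * lam / (1 + lam ^ 2))) • (1 : Matrix (Fin 2) (Fin 2) ℂ) =
      (F k t)⁻¹ * ((-(2 * lam / (1 + lam ^ 2))) • (1 : Matrix (Fin 2) (Fin 2) ℂ)) * F k t := by
    rw [Matrix.mul_smul, Matrix.smul_mul, Matrix.mul_one, h2]
  rw [hadd, hbr, hone, hconj_smul, hconj_smul, hconj_add, hconj_smul]
  rw [show ∀ P Q : Matrix (Fin 2) (Fin 2) ℂ,
      (F k t)⁻¹ * P * F k t - (F k t)⁻¹ * Q * F k t = (F k t)⁻¹ * (P - Q) * F k t from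
    fun P Q => by rw [Matrix.mul_sub, Matrix.sub_mul]]
  congr 2
  -- now the core 2×2 identity
  have hinn1 : 1 + suInner (S k t) (S (k - 1) t) = 2/(1+r) := by
    rw [h_inner]
    field_simp
    all_goals ring
  have hcoef1 : 2*lam^2/(1 + suInner (S k t) (S (k - 1) t)) = lam^2*(1+r) := by
    rw [hinn1]
    field_simp
  have hcoef2 : lam/(1 + suInner (S k t) (S (k - 1) t)) = lam*(1+r)/2 := by
    rw [hinn1]
    field_simp
    all_goals ring
  rw [hcoef1, hcoef2, hc1, hc2, hX', hAdef]
  congr 1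
  have hr1C' : (1:ℂ) + ψ * (starRingEnd ℂ) ψ ≠ 0 := by rw [hψc]; exact hr1C
  have hu := mul_inv_cancel₀ hr1C'
  ext i j
  fin_cases i <;> fin_cases j <;>
    simp [Matrix.mul_apply, Fin.sum_univ_two, Matrix.smul_apply, matI, Matrix.one_fin_two,
      Complex.real_smul] <;>
    push_cast <;>
    rw [show ((r:ℝ):ℂ) = ψ * (starRingEnd ℂ) ψ from hψc.symm]
  · linear_combination (Complex.I*(lam:ℂ)^2*((1:ℂ)+(lam:ℂ)^2)⁻¹*(1 - ψ*(starRingEnd ℂ) ψ)) * hu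
  · linear_combination (-2*(lam:ℂ)*((1:ℂ)+(lam:ℂ)^2)⁻¹*ψ) * Complex.I_mul_I +
      (-2*Complex.I*(lam:ℂ)*((1:ℂ)+(lam:ℂ)^2)⁻¹*ψ*(Complex.I+(lam:ℂ))) * hu
  · linear_combination (2*(lam:ℂ)*((1:ℂ)+(lam:ℂ)^2)⁻¹*(starRingEnd ℂ) ψ) * Complex.I_mul_I +
      (2*Complex.I*(lam:ℂ)*((1:ℂ)+(lam:ℂ)^2)⁻¹*((starRingEnd ℂ) ψ)*(Complex.I-(lam:ℂ))) * hu
  · linear_combination (-Complex.I*(lam:ℂ)^2*((1:ℂ)+(lam:ℂ)^2)⁻¹*(1 - ψ*(starRingEnd ℂ) ψ)) * hu
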